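/- arXiv:2310.11837 — 4 statements merged into one kernel-verified Lean document; each statement's English description precedes it below -/
import Mathlib

section
/- Let Θ ⊆ ℝ^i and Θ̃ ⊆ ℝ^j be open sets with i ≤ j, let g : Θ̃ → Θ be twice differentiable with surjective Jacobian at every point and with g(Θ̃) = Θ, let f : Θ → ℝ be twice continuously differentiable, and set f̃ = f ∘ g. Then f̃ has a local minimum at a point θ̃* ∈ Θ̃ if and only if f has a local minimum at θ* = g(θ̃*). -/
open Set Filter Topology

/-!
Since `Θ̃` and `Θ` are open, both local minima are unconstrained. Because `g` is `C¹` near `θ̃*`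
with surjective derivative there, the surjective inverse function theorem shows that `g` maps
neighbourhoods of `θ̃*` onto neighbourhoods of `g θ̃*`, i.e. `map g (𝓝 θ̃*) = 𝓝 (g θ̃*)`; and a
property holds near `g θ̃*` iff its pullback along `g` holds near `θ̃*`.
-/

theorem isLocalMinOn_iff_isLocalMin_of_mem_nhds {X β : Type*} [TopologicalSpace X] [Preorder β]
    {f : X → β} {s : Set X} {a : X} (hs : s ∈ 𝓝 a) : IsLocalMinOn f s a ↔ IsLocalMin f a :=
  ⟨fun h => h.isLocalMin hs, fun h => h.on s⟩

theorem isLocalMin_comp_iff_of_map_nhds_eq {X Y β : Type*} [TopologicalSpace X]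
    [TopologicalSpace Y] [Preorder β] {g : X → Y} {f : Y → β} {x : X}
    (hg : map g (𝓝 x) = 𝓝 (g x)) : IsLocalMin (f ∘ g) x ↔ IsLocalMin f (g x) := by
  rw [IsLocalMin, IsLocalMin, IsMinFilter, IsMinFilter, ← hg, eventually_map]
  rfl

theorem map_nhds_eq_of_surjective_fderiv {𝕜 E F : Type*} [RCLike 𝕜]
    [NormedAddCommGroup E] [NormedSpace 𝕜 E] [CompleteSpace E]
    [NormedAddCommGroup F] [NormedSpace 𝕜 F] [CompleteSpace F] {g : E → F} {x : E}
    (hdiff : ∀ᶠ y in 𝓝 x, DifferentiableAt 𝕜 g y) (hcont : ContinuousAt (fderiv 𝕜 g) x)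
    (hsurj : Function.Surjective (fderiv 𝕜 g x)) : map g (𝓝 x) = 𝓝 (g x) := by
  have hstrict : HasStrictFDerivAt g (fderiv 𝕜 g x) x :=
    hasStrictFDerivAt_of_hasFDerivAt_of_continuousAt
      (hdiff.mono fun _ hy => hy.hasFDerivAt) hcont
  exact hstrict.map_nhds_eq_of_surj (LinearMap.range_eq_top.2 hsurj)

theorem local_min_iff_local_min_general
    (i j : ℕ)
    (Θ : Set (EuclideanSpace ℝ (Fin i))) (Θt : Set (EuclideanSpace ℝ (Fin j)))
    (hΘ : IsOpen Θ) (hΘt : IsOpen Θt)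
    (g : EuclideanSpace ℝ (Fin j) → EuclideanSpace ℝ (Fin i))
    (hg1 : ∀ x ∈ Θt, DifferentiableAt ℝ g x)
    (hg2 : ∀ x ∈ Θt, DifferentiableAt ℝ (fderiv ℝ g) x)
    (hsub : ∀ x ∈ Θt, Function.Surjective (fderiv ℝ g x))
    (himg : g '' Θt = Θ)
    (f : EuclideanSpace ℝ (Fin i) → ℝ)
    (θtstar : EuclideanSpace ℝ (Fin j)) (hθt : θtstar ∈ Θt) :
    IsLocalMinOn (f ∘ g) Θt θtstar ↔ IsLocalMinOn f Θ (g θtstar) := by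
  have hΘt_nhds : Θt ∈ 𝓝 θtstar := hΘt.mem_nhds hθt
  have hΘ_nhds : Θ ∈ 𝓝 (g θtstar) := hΘ.mem_nhds (himg ▸ mem_image_of_mem g hθt)
  have hmap : map g (𝓝 θtstar) = 𝓝 (g θtstar) :=
    map_nhds_eq_of_surjective_fderiv (eventually_of_mem hΘt_nhds hg1)
      (hg2 θtstar hθt).continuousAt (hsub θtstar hθt)
  rw [isLocalMinOn_iff_isLocalMin_of_mem_nhds hΘt_nhds,
    isLocalMinOn_iff_isLocalMin_of_mem_nhds hΘ_nhds]
  exact isLocalMin_comp_iff_of_map_nhds_eq hmap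

/-- Proposition 1 (local minimum correspondence): with `Θ ⊆ ℝ^i`, `Θ̃ ⊆ ℝ^j` open,
`i ≤ j`, `g` twice differentiable on `Θ̃` with surjective Jacobian everywhere and
`g(Θ̃) = Θ`, and `f` twice continuously differentiable on `Θ`, the composite
`f̃ = f ∘ g` has a local minimum at `θ̃* ∈ Θ̃` iff `f` has a local minimum at `g θ̃*`. -/
theorem local_min_iff_local_min
    (i j : ℕ) (hij : i ≤ j)
    (Θ : Set (EuclideanSpace ℝ (Fin i))) (Θt : Set (EuclideanSpace ℝ (Fin j)))
    (hΘ : IsOpen Θ) (hΘt : IsOpen Θt)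
    (g : EuclideanSpace ℝ (Fin j) → EuclideanSpace ℝ (Fin i))
    (hg1 : ∀ x ∈ Θt, DifferentiableAt ℝ g x)
    (hg2 : ∀ x ∈ Θt, DifferentiableAt ℝ (fderiv ℝ g) x)
    (hsub : ∀ x ∈ Θt, Function.Surjective (fderiv ℝ g x))
    (himg : g '' Θt = Θ)
    (f : EuclideanSpace ℝ (Fin i) → ℝ)
    (hf : ContDiffOn ℝ 2 f Θ)
    (θtstar : EuclideanSpace ℝ (Fin j)) (hθt : θtstar ∈ Θt) :
    IsLocalMinOn (f ∘ g) Θt θtstar ↔ IsLocalMinOn f Θ (g θtstar) :=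
  local_min_iff_local_min_general i j Θ Θt hΘ hΘt g hg1 hg2 hsub himg f θtstar hθt
end

section
/- Let Θ ⊆ ℝ^i and Θ̃ ⊆ ℝ^j be open sets with i ≤ j, let g : Θ̃ → Θ be twice differentiable with surjective Jacobian at every point and with g(Θ̃) = Θ, let f : Θ → ℝ be twice continuously differentiable, and set f̃ = f ∘ g. Then f̃ has a saddle point at θ̃ ∈ Θ̃ if and only if f has a saddle point at θ = g(θ̃). -/
open Set Topology

/-- A saddle point of `h` on `s` at `p`: a critical point (vanishing Fréchet
derivative, equivalently vanishing gradient) that is neither a local minimum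
nor a local maximum. -/
def IsSaddlePointOn' {E : Type*} [NormedAddCommGroup E] [NormedSpace ℝ E]
    (h : E → ℝ) (s : Set E) (p : E) : Prop :=
  fderiv ℝ h p = 0 ∧ ¬ IsLocalMinOn h s p ∧ ¬ IsLocalMaxOn h s p

/-!
A submersion of class `C¹` is open at every point by the surjective-derivative form of the
inverse function theorem, i.e. `g` maps the neighbourhood filter of `θ̃` onto that of `g θ̃`.
Hence `f ∘ g` and `f` have the same local extrema at `θ̃` and `g θ̃`. By the chain rule
`D(f ∘ g)(θ̃) = Df(g θ̃) ∘ Dg(θ̃)`, and since `Dg(θ̃)` is onto, one side vanishes iff the other does.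
-/

open Filter Function

theorem ContinuousLinearMap.comp_eq_zero_iff_of_surjective {R M N P : Type*} [Semiring R]
    [AddCommMonoid M] [AddCommMonoid N] [AddCommMonoid P] [TopologicalSpace M]
    [TopologicalSpace N] [TopologicalSpace P] [Module R M] [Module R N] [Module R P]
    {A : N →L[R] P} {L : M →L[R] N} (hL : Surjective L) : A.comp L = 0 ↔ A = 0 := by
  refine ⟨fun h => ext fun v => ?_, fun h => by simp [h]⟩
  obtain ⟨u, rfl⟩ := hL v
  exact congr($h u)

section LocalExtr

variable {α β γ : Type*} [TopologicalSpace α] [TopologicalSpace β] [Preorder γ]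
  {f : β → γ} {g : α → β} {s : Set α} {t : Set β} {a : α}

theorem isLocalMinOn_comp_iff_of_map_nhds_eq (hs : s ∈ 𝓝 a) (ht : t ∈ 𝓝 (g a))
    (hg : map g (𝓝 a) = 𝓝 (g a)) : IsLocalMinOn (f ∘ g) s a ↔ IsLocalMinOn f t (g a) := by
  rw [IsLocalMinOn, IsLocalMinOn, nhdsWithin_eq_nhds.2 hs, nhdsWithin_eq_nhds.2 ht, IsMinFilter,
    IsMinFilter, ← hg, eventually_map]
  rfl

theorem isLocalMaxOn_comp_iff_of_map_nhds_eq (hs : s ∈ 𝓝 a) (ht : t ∈ 𝓝 (g a))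
    (hg : map g (𝓝 a) = 𝓝 (g a)) : IsLocalMaxOn (f ∘ g) s a ↔ IsLocalMaxOn f t (g a) :=
  isLocalMinOn_comp_iff_of_map_nhds_eq (γ := γᵒᵈ) hs ht hg

end LocalExtr

section Submersion

variable {𝕜 E F G : Type*} [RCLike 𝕜] [NormedAddCommGroup E] [NormedSpace 𝕜 E]
  [NormedAddCommGroup F] [NormedSpace 𝕜 F] [NormedAddCommGroup G] [NormedSpace 𝕜 G]
  {g : E → F} {x : E}

theorem map_nhds_eq_of_continuousAt_fderiv [CompleteSpace E] [CompleteSpace F]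
    (hg : ∀ᶠ y in 𝓝 x, DifferentiableAt 𝕜 g y) (hg' : ContinuousAt (fderiv 𝕜 g) x)
    (hsurj : Surjective (fderiv 𝕜 g x)) : map g (𝓝 x) = 𝓝 (g x) :=
  (hasStrictFDerivAt_of_hasFDerivAt_of_continuousAt
    (hg.mono fun _ hy => hy.hasFDerivAt) hg').map_nhds_eq_of_surj
    (LinearMap.range_eq_top.2 hsurj)

theorem fderiv_comp_eq_zero_iff {f : F → G} (hf : DifferentiableAt 𝕜 f (g x))
    (hg : DifferentiableAt 𝕜 g x) (hsurj : Surjective (fderiv 𝕜 g x)) :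
    fderiv 𝕜 (f ∘ g) x = 0 ↔ fderiv 𝕜 f (g x) = 0 := by
  rw [fderiv_comp x hf hg, ContinuousLinearMap.comp_eq_zero_iff_of_surjective hsurj]

end Submersion

theorem saddle_point_iff_general
    (i j : ℕ)
    (Θ : Set (EuclideanSpace ℝ (Fin i))) (Θt : Set (EuclideanSpace ℝ (Fin j)))
    (hΘ : IsOpen Θ) (hΘt : IsOpen Θt)
    (g : EuclideanSpace ℝ (Fin j) → EuclideanSpace ℝ (Fin i))
    (hg1 : ∀ x ∈ Θt, DifferentiableAt ℝ g x)
    (hg2 : ∀ x ∈ Θt, DifferentiableAt ℝ (fderiv ℝ g) x)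
    (hsub : ∀ x ∈ Θt, Function.Surjective (fderiv ℝ g x))
    (himg : g '' Θt = Θ)
    (f : EuclideanSpace ℝ (Fin i) → ℝ)
    (hf : ContDiffOn ℝ 2 f Θ)
    (θt : EuclideanSpace ℝ (Fin j)) (hθt : θt ∈ Θt) :
    IsSaddlePointOn' (f ∘ g) Θt θt ↔ IsSaddlePointOn' f Θ (g θt) := by
  have hΘt_nhds : Θt ∈ 𝓝 θt := hΘt.mem_nhds hθt
  have hΘ_nhds : Θ ∈ 𝓝 (g θt) := hΘ.mem_nhds (himg ▸ mem_image_of_mem g hθt)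
  have hopen : map g (𝓝 θt) = 𝓝 (g θt) :=
    map_nhds_eq_of_continuousAt_fderiv (eventually_of_mem hΘt_nhds hg1)
      (hg2 θt hθt).continuousAt (hsub θt hθt)
  have hf_diff : DifferentiableAt ℝ f (g θt) :=
    (hf.contDiffAt hΘ_nhds).differentiableAt two_ne_zero
  simp only [IsSaddlePointOn', fderiv_comp_eq_zero_iff hf_diff (hg1 θt hθt) (hsub θt hθt),
    isLocalMinOn_comp_iff_of_map_nhds_eq hΘt_nhds hΘ_nhds hopen,
    isLocalMaxOn_comp_iff_of_map_nhds_eq hΘt_nhds hΘ_nhds hopen]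

/-- Proposition 4 (saddle point correspondence): `f̃ = f ∘ g` has a saddle point
at `θ̃ ∈ Θ̃` iff `f` has a saddle point at `θ = g θ̃`. -/
theorem saddle_point_iff
    (i j : ℕ) (hij : i ≤ j)
    (Θ : Set (EuclideanSpace ℝ (Fin i))) (Θt : Set (EuclideanSpace ℝ (Fin j)))
    (hΘ : IsOpen Θ) (hΘt : IsOpen Θt)
    (g : EuclideanSpace ℝ (Fin j) → EuclideanSpace ℝ (Fin i))
    (hg1 : ∀ x ∈ Θt, DifferentiableAt ℝ g x)
    (hg2 : ∀ x ∈ Θt, DifferentiableAt ℝ (fderiv ℝ g) x)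
    (hsub : ∀ x ∈ Θt, Function.Surjective (fderiv ℝ g x))
    (himg : g '' Θt = Θ)
    (f : EuclideanSpace ℝ (Fin i) → ℝ)
    (hf : ContDiffOn ℝ 2 f Θ)
    (θt : EuclideanSpace ℝ (Fin j)) (hθt : θt ∈ Θt) :
    IsSaddlePointOn' (f ∘ g) Θt θt ↔ IsSaddlePointOn' f Θ (g θt) :=
  saddle_point_iff_general i j Θ Θt hΘ hΘt g hg1 hg2 hsub himg f hf θt hθt
end

section
/- Let Θ ⊆ ℝ^i and Θ̃ ⊆ ℝ^j be open sets with i ≤ j, let g : Θ̃ → Θ be twice differentiable with surjective Jacobian at every point and with g(Θ̃) = Θ, let f : Θ → ℝ be twice continuously differentiable, and set f̃ = f ∘ g. If f̃ has a non-strict saddle point at θ̃ ∈ Θ̃, then f has a non-strict saddle point at θ = g(θ̃). -/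
/-! Since `D(f ∘ g) = Df ∘ Dg` and `Dg` is onto, a critical point of `f ∘ g` maps to a critical
point of `f`. At such a point the second-order chain rule loses its `Df (D²g)` term, so the
Hessian of `f ∘ g` is the pullback `(v, w) ↦ D²f (Dg v) (Dg w)`, and surjectivity of `Dg` turns a
negative direction of `D²f` into one of `D²(f ∘ g)`. A local extremum of `f` on `Θ` pulls back
along the continuous map `g : Θ̃ → Θ` to one of `f ∘ g` on `Θ̃`. -/

open Set Topology

/-- A non-strict saddle point: a saddle point at which the Hessian (the second
derivative quadratic form `v ↦ vᵀ(∇²h)v`) has no direction of strictly negative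
curvature. -/
def IsNonStrictSaddlePointOn {E : Type*} [NormedAddCommGroup E] [NormedSpace ℝ E]
    (h : E → ℝ) (s : Set E) (p : E) : Prop :=
  IsSaddlePointOn' h s p ∧ ¬ ∃ v : E, iteratedFDeriv ℝ 2 h p ![v, v] < 0

open Filter

section ChainRule

variable {𝕜 E F G : Type*} [NontriviallyNormedField 𝕜]
  [NormedAddCommGroup E] [NormedSpace 𝕜 E] [NormedAddCommGroup F] [NormedSpace 𝕜 F]
  [NormedAddCommGroup G] [NormedSpace 𝕜 G] {f : F → G} {g : E → F} {x : E}

theorem fderiv_eq_zero_of_fderiv_comp_eq_zero (hf : DifferentiableAt 𝕜 f (g x))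
    (hg : DifferentiableAt 𝕜 g x) (hsurj : Function.Surjective (fderiv 𝕜 g x))
    (h : fderiv 𝕜 (f ∘ g) x = 0) : fderiv 𝕜 f (g x) = 0 := by
  ext1 w
  obtain ⟨v, rfl⟩ := hsurj w
  simpa [fderiv_comp x hf hg] using congr($h v)

theorem iteratedFDeriv_two_comp_apply
    (hf : ∀ᶠ y in 𝓝 (g x), DifferentiableAt 𝕜 f y) (hf' : DifferentiableAt 𝕜 (fderiv 𝕜 f) (g x))
    (hg : ∀ᶠ y in 𝓝 x, DifferentiableAt 𝕜 g y) (hg' : DifferentiableAt 𝕜 (fderiv 𝕜 g) x)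
    (v w : E) :
    iteratedFDeriv 𝕜 2 (f ∘ g) x ![v, w] =
      iteratedFDeriv 𝕜 2 f (g x) ![fderiv 𝕜 g x v, fderiv 𝕜 g x w] +
        fderiv 𝕜 f (g x) (iteratedFDeriv 𝕜 2 g x ![v, w]) := by
  have hchain : fderiv 𝕜 (f ∘ g) =ᶠ[𝓝 x] fun y ↦ (fderiv 𝕜 f (g y)).comp (fderiv 𝕜 g y) := by
    filter_upwards [hg, hg.self_of_nhds.continuousAt.eventually hf] with y hgy hfy
    exact fderiv_comp y hfy hgy
  have hD := (hf'.hasFDerivAt.comp x hg.self_of_nhds.hasFDerivAt).clm_comp hg'.hasFDerivAt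
  simp only [iteratedFDeriv_two_apply, (hD.congr_of_eventuallyEq hchain).fderiv]
  simp [add_comm]

theorem iteratedFDeriv_two_comp_apply_of_fderiv_eq_zero
    (hf : ∀ᶠ y in 𝓝 (g x), DifferentiableAt 𝕜 f y) (hf' : DifferentiableAt 𝕜 (fderiv 𝕜 f) (g x))
    (hg : ∀ᶠ y in 𝓝 x, DifferentiableAt 𝕜 g y) (hg' : DifferentiableAt 𝕜 (fderiv 𝕜 g) x)
    (hcrit : fderiv 𝕜 f (g x) = 0) (v w : E) :
    iteratedFDeriv 𝕜 2 (f ∘ g) x ![v, w] =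
      iteratedFDeriv 𝕜 2 f (g x) ![fderiv 𝕜 g x v, fderiv 𝕜 g x w] := by
  simp [iteratedFDeriv_two_comp_apply hf hf' hg hg', hcrit]

end ChainRule

section SaddlePoint

variable {E F : Type*} [NormedAddCommGroup E] [NormedSpace ℝ E]
  [NormedAddCommGroup F] [NormedSpace ℝ F] {f : F → ℝ} {g : E → F} {s : Set E} {t : Set F}
  {x : E}

theorem IsSaddlePointOn'.of_comp (h : IsSaddlePointOn' (f ∘ g) s x) (hst : MapsTo g s t)
    (hf : DifferentiableAt ℝ f (g x)) (hg : DifferentiableAt ℝ g x)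
    (hsurj : Function.Surjective (fderiv ℝ g x)) : IsSaddlePointOn' f t (g x) := by
  obtain ⟨hcrit, hnotMin, hnotMax⟩ := h
  have hlim : Tendsto g (𝓝[s] x) (𝓝[t] (g x)) :=
    hg.continuousAt.continuousWithinAt.tendsto_nhdsWithin hst
  exact ⟨fderiv_eq_zero_of_fderiv_comp_eq_zero hf hg hsurj hcrit,
    fun hmin ↦ hnotMin (hmin.comp_tendsto hlim), fun hmax ↦ hnotMax (hmax.comp_tendsto hlim)⟩

theorem IsNonStrictSaddlePointOn.of_comp (h : IsNonStrictSaddlePointOn (f ∘ g) s x)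
    (hst : MapsTo g s t) (hf : ∀ᶠ y in 𝓝 (g x), DifferentiableAt ℝ f y)
    (hf' : DifferentiableAt ℝ (fderiv ℝ f) (g x)) (hg : ∀ᶠ y in 𝓝 x, DifferentiableAt ℝ g y)
    (hg' : DifferentiableAt ℝ (fderiv ℝ g) x) (hsurj : Function.Surjective (fderiv ℝ g x)) :
    IsNonStrictSaddlePointOn f t (g x) := by
  obtain ⟨hsaddle, hnoNeg⟩ := h
  have hsaddle' := hsaddle.of_comp hst hf.self_of_nhds hg.self_of_nhds hsurj
  refine ⟨hsaddle', ?_⟩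
  rintro ⟨w, hw⟩
  obtain ⟨v, rfl⟩ := hsurj w
  exact hnoNeg ⟨v, by rwa [iteratedFDeriv_two_comp_apply_of_fderiv_eq_zero hf hf' hg hg'
    hsaddle'.1]⟩

end SaddlePoint

theorem nonstrict_saddle_point_of_nonstrict_saddle_point_general
    (i j : ℕ)
    (Θ : Set (EuclideanSpace ℝ (Fin i))) (Θt : Set (EuclideanSpace ℝ (Fin j)))
    (hΘ : IsOpen Θ) (hΘt : IsOpen Θt)
    (g : EuclideanSpace ℝ (Fin j) → EuclideanSpace ℝ (Fin i))
    (hg1 : ∀ x ∈ Θt, DifferentiableAt ℝ g x)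
    (hg2 : ∀ x ∈ Θt, DifferentiableAt ℝ (fderiv ℝ g) x)
    (hsub : ∀ x ∈ Θt, Function.Surjective (fderiv ℝ g x))
    (himg : g '' Θt = Θ)
    (f : EuclideanSpace ℝ (Fin i) → ℝ)
    (hf : ContDiffOn ℝ 2 f Θ)
    (θt : EuclideanSpace ℝ (Fin j)) (hθt : θt ∈ Θt)
    (hsaddle : IsNonStrictSaddlePointOn (f ∘ g) Θt θt) :
    IsNonStrictSaddlePointOn f Θ (g θt) := by
  have hmaps : MapsTo g Θt Θ := himg ▸ mapsTo_image g Θt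
  have hΘnhds : Θ ∈ 𝓝 (g θt) := hΘ.mem_nhds (hmaps hθt)
  exact hsaddle.of_comp hmaps
    ((hf.differentiableOn two_ne_zero).eventually_differentiableAt hΘnhds)
    (((hf.contDiffAt hΘnhds).fderiv_right (m := 1) le_rfl).differentiableAt one_ne_zero)
    (eventually_of_mem (hΘt.mem_nhds hθt) hg1) (hg2 θt hθt) (hsub θt hθt)

/-- Proposition 5: if `f̃ = f ∘ g` has a non-strict saddle point at `θ̃ ∈ Θ̃`,
then `f` has a non-strict saddle point at `θ = g θ̃`. -/
theorem nonstrict_saddle_point_of_nonstrict_saddle_point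
    (i j : ℕ) (hij : i ≤ j)
    (Θ : Set (EuclideanSpace ℝ (Fin i))) (Θt : Set (EuclideanSpace ℝ (Fin j)))
    (hΘ : IsOpen Θ) (hΘt : IsOpen Θt)
    (g : EuclideanSpace ℝ (Fin j) → EuclideanSpace ℝ (Fin i))
    (hg1 : ∀ x ∈ Θt, DifferentiableAt ℝ g x)
    (hg2 : ∀ x ∈ Θt, DifferentiableAt ℝ (fderiv ℝ g) x)
    (hsub : ∀ x ∈ Θt, Function.Surjective (fderiv ℝ g x))
    (himg : g '' Θt = Θ)
    (f : EuclideanSpace ℝ (Fin i) → ℝ)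
    (hf : ContDiffOn ℝ 2 f Θ)
    (θt : EuclideanSpace ℝ (Fin j)) (hθt : θt ∈ Θt)
    (hsaddle : IsNonStrictSaddlePointOn (f ∘ g) Θt θt) :
    IsNonStrictSaddlePointOn f Θ (g θt) :=
  nonstrict_saddle_point_of_nonstrict_saddle_point_general i j Θ Θt hΘ hΘt g hg1 hg2 hsub himg f hf
    θt hθt hsaddle
end

section
/- Let X be a set, k ≥ 2 an integer, and t_1, …, t_m : X → ℝ functions such that the constant function 1 together with t_1, …, t_m are linearly independent as real-valued functions on X. Define functions on {1, …, k} × X by s_i(z, x) = 𝟙{z = i} for i = 1, …, k−1 and u_{ij}(z, x) = 𝟙{z = i}·t_j(x) for i = 1, …, k and j = 1, …, m. Then the constant function 1 together with the (k−1) + km functions s_i and u_{ij} are linearly independent as real-valued functions on {1, …, k} × X. -/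
open Set

/-- Minimality of the EF mixture model: if the constant function `1` together with
the sufficient statistics `t_1, …, t_m : X → ℝ` are linearly independent, then on
`{1, …, k} × X` (with `k ≥ 2`) the constant function `1` together with the mixture
model statistics `s_i(z, x) = 𝟙{z = i}` (for `i = 1, …, k−1`) and
`u_{ij}(z, x) = 𝟙{z = i}·t_j(x)` (for `i = 1, …, k`, `j = 1, …, m`) are linearly
independent. -/
theorem mixture_model_statistics_linearIndependent
    {X : Type*} (k m : ℕ) (hk : 2 ≤ k) (t : Fin m → X → ℝ)
    (h : LinearIndependent ℝ
      (Fin.cons (fun _ => (1 : ℝ)) t : Fin (m + 1) → X → ℝ)) :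
    LinearIndependent ℝ
      (fun o : Option (Fin (k - 1) ⊕ Fin k × Fin m) =>
        o.elim (fun _ : Fin k × X => (1 : ℝ))
          (Sum.elim
            (fun i : Fin (k - 1) => fun p : Fin k × X =>
              if p.1 = Fin.castLE (Nat.sub_le k 1) i then (1 : ℝ) else 0)
            (fun q : Fin k × Fin m => fun p : Fin k × X =>
              if p.1 = q.1 then t q.2 p.2 else 0))) := by
  rw [Fintype.linearIndependent_iff] at h ⊢
  intro g hg
  set A : Fin k → ℝ := fun z => g none + ∑ i : Fin (k-1),
    if z = Fin.castLE (Nat.sub_le k 1) i then g (some (Sum.inl i)) else 0 with hA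
  have key : ∀ z : Fin k, A z = 0 ∧ ∀ j : Fin m, g (some (Sum.inr (z, j))) = 0 := by
    intro z
    have hsum : ∀ x : X,
        A z + ∑ j : Fin m, g (some (Sum.inr (z, j))) * t j x = 0 := by
      intro x
      have h0 := congrFun hg (z, x)
      simp only [Finset.sum_apply, Pi.smul_apply, smul_eq_mul, Pi.zero_apply,
        Fintype.sum_option, Fintype.sum_sum_type, Fintype.sum_prod_type,
        Option.elim, Sum.elim_inl, Sum.elim_inr, mul_ite, mul_one, mul_zero] at h0
      have hswap : (∑ x1 : Fin k, ∑ x2 : Fin m,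
          if z = x1 then g (some (Sum.inr (x1, x2))) * t x2 x else 0)
          = ∑ j : Fin m, g (some (Sum.inr (z, j))) * t j x := by
        rw [Finset.sum_comm]
        exact Finset.sum_congr rfl fun j _ => by rw [Finset.sum_ite_eq]; simp
      rw [hA, add_assoc, ← hswap]
      exact h0
    have hc := h (Fin.cons (A z) fun j => g (some (Sum.inr (z, j)))) ?_
    · exact ⟨by simpa using hc 0, fun j => by simpa using hc j.succ⟩
    · funext x
      simpa [Fin.sum_univ_succ] using hsum x
  have hnone : g none = 0 := by
    have h1 := (key ⟨k-1, by omega⟩).1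
    have hz : (∑ i : Fin (k-1), if (⟨k-1, by omega⟩ : Fin k) = Fin.castLE (Nat.sub_le k 1) i
        then g (some (Sum.inl i)) else 0) = 0 := by
      refine Finset.sum_eq_zero fun i _ => if_neg ?_
      intro hEq
      have hv := congrArg Fin.val hEq
      simp [Fin.castLE] at hv
      omega
    rw [hA] at h1
    simpa [hz] using h1
  intro o
  match o with
  | none => exact hnone
  | some (Sum.inr (z, j)) => exact (key z).2 j
  | some (Sum.inl i) =>
      have h1 := (key (Fin.castLE (Nat.sub_le k 1) i)).1
      rw [hA] at h1
      simp only [Fin.castLE_inj] at h1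
      rw [Finset.sum_ite_eq] at h1
      simpa [hnone] using h1
end
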